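/- arXiv:math/0405268 — 3 statements merged into one kernel-verified Lean document; each statement's English description precedes it below -/
import Mathlib

section
/- Let E, F, G be topological graphs, let m be a regular factor map from F to E, and let n be a regular factor map from G to F. Then the composition m ∘ n = (m^0 ∘ n^0, m^1 ∘ n^1) is a regular factor map from G to E. -/
/-!
Composing factor maps is formal: edges lift uniquely through `m` and then through `n`.
For regularity the point is that a regular factor map `m` pulls regular vertices back to
regular vertices. If `m⁰ u = w` is regular, pick a compact neighbourhood `K` of `w` inside
`E⁰_rg` with `r_E⁻¹ K` compact; regularity forces `r_F⁻¹ (m⁰⁻¹ K)` into `m¹⁻¹ (r_E⁻¹ K)`,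
which is compact because `m¹` fixes `∞`. Sources of `F` receive no edges, so regularity sends
them outside `E⁰_rg`; hence so does their closure, which therefore misses `u`.
-/

open Set Filter OnePoint

namespace TopGraphAux

/-- `E⁰_sce`: the open set of sources of a topological graph. -/
def graphSce {E0 E1 : Type*} [TopologicalSpace E0] (r : E1 → E0) : Set E0 :=
  (closure (Set.range r))ᶜ

/-- `E⁰_fin`: vertices having a neighborhood whose `r`-preimage is compact. -/
def graphFin {E0 E1 : Type*} [TopologicalSpace E0] [TopologicalSpace E1] (r : E1 → E0) :
    Set E0 :=
  {v | ∃ V ∈ nhds v, IsCompact (r ⁻¹' V)}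

/-- `E⁰_rg`: the open set of regular vertices of a topological graph. -/
def graphRg {E0 E1 : Type*} [TopologicalSpace E0] [TopologicalSpace E1] (r : E1 → E0) :
    Set E0 :=
  graphFin r \ closure (graphSce r)

/-- A factor map from the topological graph `F = (F0, F1, dF, rF)` to the topological graph
`E = (E0, E1, dE, rE)`: a pair of continuous maps between one-point compactifications sending
`∞` to `∞`, intertwining range and domain maps, and with the unique edge-lifting property. -/
structure IsFactorMap {E0 E1 F0 F1 : Type*}
    [TopologicalSpace E0] [TopologicalSpace E1] [TopologicalSpace F0] [TopologicalSpace F1]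
    (dE rE : E1 → E0) (dF rF : F1 → F0)
    (m0 : OnePoint F0 → OnePoint E0) (m1 : OnePoint F1 → OnePoint E1) : Prop where
  continuous_m0 : Continuous m0
  continuous_m1 : Continuous m1
  map_infty0 : m0 ∞ = ∞
  map_infty1 : m1 ∞ = ∞
  compat : ∀ (e : F1) (e' : E1), m1 ↑e = ↑e' →
    (↑(rE e') : OnePoint E0) = m0 ↑(rF e) ∧ (↑(dE e') : OnePoint E0) = m0 ↑(dF e)
  lift : ∀ (e' : E1) (v : F0), (↑(dE e') : OnePoint E0) = m0 ↑v →
    ∃! e : F1, m1 ↑e = (↑e' : OnePoint E1) ∧ dF e = v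

/-- Regularity of a factor map: every vertex mapping to a regular vertex receives an edge,
and all edges it receives are mapped to genuine edges. -/
def IsRegularFactorMap {E0 E1 F0 F1 : Type*}
    [TopologicalSpace E0] [TopologicalSpace E1] [TopologicalSpace F0] [TopologicalSpace F1]
    (rE : E1 → E0) (rF : F1 → F0)
    (m0 : OnePoint F0 → OnePoint E0) (m1 : OnePoint F1 → OnePoint E1) : Prop :=
  ∀ (v : F0) (w : E0), m0 ↑v = ↑w → w ∈ graphRg rE →
    (∃ e : F1, rF e = v) ∧ ∀ e : F1, rF e = v → ∃ e' : E1, m1 ↑e = ↑e'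

/-- `f` restricts to a homeomorphism from `U` onto `V`. -/
def IsHomeoOn {X Y : Type*} [TopologicalSpace X] [TopologicalSpace Y]
    (f : X → Y) (U : Set X) (V : Set Y) : Prop :=
  ∃ h : U ≃ₜ V, ∀ x : U, (h x : Y) = f (x : X)

/-- Extension of a map `A → OnePoint B` to the one-point compactification, sending `∞` to `∞`. -/
def onePointLift {A B : Type*} (f : A → OnePoint B) : OnePoint A → OnePoint B :=
  fun x => Option.elim x ∞ f

/-- The relation identifying the copy in `S` of each point of `B ⊆ S` with the corresponding
point of `X`. -/
def glueRel {X : Type*} (S B : Set X) : (X ⊕ ↥S) → (X ⊕ ↥S) → Prop :=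
  fun a b => ∃ x : ↥S, (x : X) ∈ B ∧
    ((a = Sum.inl ↑x ∧ b = Sum.inr x) ∨ (a = Sum.inr x ∧ b = Sum.inl ↑x))

/-- The space `X ⨿_B S` obtained from `X ⊔ S` by identifying the two copies of each point
of `B ⊆ S ⊆ X`. -/
def Glue (X : Type*) (S B : Set X) : Type _ := Quot (glueRel S B)

instance {X : Type*} [TopologicalSpace X] (S B : Set X) : TopologicalSpace (Glue X S B) :=
  inferInstanceAs (TopologicalSpace (Quot _))

/-- The canonical inclusion `X → X ⨿_B S`. -/
def Glue.inl {X : Type*} {S B : Set X} (x : X) : Glue X S B := Quot.mk _ (Sum.inl x)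

/-- The inclusion of the extra copy `S → X ⨿_B S`. -/
def Glue.inr {X : Type*} {S B : Set X} (x : ↥S) : Glue X S B := Quot.mk _ (Sum.inr x)

/-- The extension `d_Y` of the domain map `d` to the graph `E_Y`. -/
def glueD {E0 E1 : Type*} [TopologicalSpace E0] (d : E1 → E0) (Y : Set E0) :
    Glue E1 (d ⁻¹' closure Y) (d ⁻¹' (closure Y \ Y)) → Glue E0 (closure Y) (closure Y \ Y) :=
  Quot.lift
    (Sum.elim (fun e => Glue.inl (d e)) (fun e => Glue.inr ⟨d e.1, e.2⟩))
    (by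
      rintro a b ⟨x, hx, (⟨rfl, rfl⟩ | ⟨rfl, rfl⟩)⟩
      · exact Quot.sound ⟨⟨d x.1, x.2⟩, hx, Or.inl ⟨rfl, rfl⟩⟩
      · exact (Quot.sound ⟨⟨d x.1, x.2⟩, hx, Or.inl ⟨rfl, rfl⟩⟩).symm)

/-- The extension `r_Y` of the range map `r` to the graph `E_Y`. -/
def glueR {E0 E1 : Type*} [TopologicalSpace E0] (d r : E1 → E0) (Y : Set E0) :
    Glue E1 (d ⁻¹' closure Y) (d ⁻¹' (closure Y \ Y)) → Glue E0 (closure Y) (closure Y \ Y) :=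
  Quot.lift (Sum.elim (fun e => Glue.inl (r e)) (fun e => Glue.inl (r e.1)))
    (by rintro a b ⟨x, hx, (⟨rfl, rfl⟩ | ⟨rfl, rfl⟩)⟩ <;> rfl)

/-- The projection from the glued space back onto the original space. -/
def glueProj {X : Type*} (S B : Set X) : Glue X S B → X :=
  Quot.lift (Sum.elim id Subtype.val)
    (by rintro a b ⟨x, hx, (⟨rfl, rfl⟩ | ⟨rfl, rfl⟩)⟩ <;> rfl)

/-- A point of the projective limit `E^i = Ẽ^i \ {∞}`: a compatible thread of points of the
one-point compactifications, not all equal to `∞`. -/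
structure LimPt {Λ : Type*} [Preorder Λ] (X : Λ → Type*)
    (m : ∀ ⦃l l' : Λ⦄, l ≤ l' → OnePoint (X l') → OnePoint (X l)) where
  pt : ∀ l, OnePoint (X l)
  compat : ∀ ⦃l l' : Λ⦄ (h : l ≤ l'), m h (pt l') = pt l
  exists_ne_infty : ∃ l, pt l ≠ ∞

instance {Λ : Type*} [Preorder Λ] (X : Λ → Type*) [∀ l, TopologicalSpace (X l)]
    (m : ∀ ⦃l l' : Λ⦄, l ≤ l' → OnePoint (X l') → OnePoint (X l)) :
    TopologicalSpace (LimPt X m) :=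
  TopologicalSpace.induced LimPt.pt inferInstance

/-- Topological freeness: the set of base points of loops without entrances has empty
interior. -/
def IsTopologicallyFree {E0 E1 : Type*} [TopologicalSpace E0] (d r : E1 → E0) : Prop :=
  interior {v : E0 | ∃ (n : ℕ) (hn : 0 < n) (e : Fin n → E1),
      (∀ k : Fin n, d (e k) = r (e ⟨(k.1 + 1) % n, Nat.mod_lt _ hn⟩)) ∧
      (∀ (k : Fin n) (e' : E1), r e' = r (e k) → e' = e k) ∧
      r (e ⟨0, hn⟩) = v} = ∅

open scoped Classical in
/-- Partial iteration of a partially defined map `σ` with domain `W`: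
`sgdsIter σ n x = some y` iff `x ∈ dom (σ^n)` and `σ^n x = y`. -/
noncomputable def sgdsIter {X : Type*} {W : Set X} (σ : ↥W → X) : ℕ → X → Option X
  | 0, x => Option.some x
  | n + 1, x => if h : x ∈ W then sgdsIter σ n (σ ⟨x, h⟩) else none

theorem OnePoint.exists_eq_coe_of_map_eq_coe {X Y : Type*} {g : OnePoint X → OnePoint Y}
    (hg : g ∞ = ∞) {x : OnePoint X} {y : Y} (hx : g x = ↑y) : ∃ a : X, x = ↑a := by
  induction x using OnePoint.rec with
  | infty => exact absurd (hg ▸ hx) (infty_ne_coe y)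
  | coe a => exact ⟨a, rfl⟩

theorem OnePoint.isCompact_preimage_image_coe {X Y : Type*} [TopologicalSpace X]
    [TopologicalSpace Y] {g : OnePoint X → OnePoint Y} (hg : Continuous g) (hg_infty : g ∞ = ∞)
    {K : Set Y} (hK_closed : IsClosed K) (hK_compact : IsCompact K) :
    IsCompact (((↑) : X → OnePoint X) ⁻¹' (g ⁻¹' ((↑) '' K))) := by
  have hsub : g ⁻¹' ((↑) '' K) ⊆ range ((↑) : X → OnePoint X) := fun _ ⟨_, _, hy⟩ =>
    (OnePoint.exists_eq_coe_of_map_eq_coe hg_infty hy.symm).imp fun _ h => h.symm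
  have hclosed : IsClosed (g ⁻¹' ((↑) '' K)) :=
    (isClosed_image_coe.2 ⟨hK_closed, hK_compact⟩).preimage hg
  rw [← image_preimage_eq_of_subset hsub, isClosed_image_coe] at hclosed
  exact hclosed.2

theorem isOpen_graphRg {E0 E1 : Type*} [TopologicalSpace E0] [TopologicalSpace E1]
    (r : E1 → E0) : IsOpen (graphRg r) := by
  refine IsOpen.sdiff (isOpen_iff_mem_nhds.2 ?_) isClosed_closure
  rintro v ⟨V, hV, hK⟩
  filter_upwards [interior_mem_nhds.2 hV] with x hx
  exact ⟨V, mem_interior_iff_mem_nhds.1 hx, hK⟩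

section

variable {E0 E1 F0 F1 G0 G1 : Type*}
  [TopologicalSpace E0] [TopologicalSpace E1] [TopologicalSpace F0] [TopologicalSpace F1]
  [TopologicalSpace G0] [TopologicalSpace G1]
  {dE rE : E1 → E0} {dF rF : F1 → F0} {dG rG : G1 → G0}
  {m0 : OnePoint F0 → OnePoint E0} {m1 : OnePoint F1 → OnePoint E1}
  {n0 : OnePoint G0 → OnePoint F0} {n1 : OnePoint G1 → OnePoint F1}

theorem IsFactorMap.comp (hm : IsFactorMap dE rE dF rF m0 m1)
    (hn : IsFactorMap dF rF dG rG n0 n1) :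
    IsFactorMap dE rE dG rG (m0 ∘ n0) (m1 ∘ n1) where
  continuous_m0 := hm.continuous_m0.comp hn.continuous_m0
  continuous_m1 := hm.continuous_m1.comp hn.continuous_m1
  map_infty0 := by simp only [Function.comp_apply, hn.map_infty0, hm.map_infty0]
  map_infty1 := by simp only [Function.comp_apply, hn.map_infty1, hm.map_infty1]
  compat g e' hge' := by
    obtain ⟨f, hf⟩ := OnePoint.exists_eq_coe_of_map_eq_coe hm.map_infty1 hge'
    obtain ⟨hr, hd⟩ := hm.compat f e' (hf ▸ hge')
    obtain ⟨hr', hd'⟩ := hn.compat g f hf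
    exact ⟨hr.trans (congrArg m0 hr'), hd.trans (congrArg m0 hd')⟩
  lift e' v hdv := by
    obtain ⟨u, hu⟩ := OnePoint.exists_eq_coe_of_map_eq_coe hm.map_infty0 hdv.symm
    obtain ⟨f, ⟨hfe', hfu⟩, hf_unique⟩ := hm.lift e' u (hu ▸ hdv)
    obtain ⟨g, ⟨hgf, hgv⟩, hg_unique⟩ := hn.lift f v (hfu ▸ hu.symm)
    refine ⟨g, ⟨by simp only [Function.comp_apply, hgf, hfe'], hgv⟩, ?_⟩
    rintro g' ⟨hg'e', rfl⟩
    obtain ⟨f', hf'⟩ := OnePoint.exists_eq_coe_of_map_eq_coe hm.map_infty1 hg'e'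
    have hdf' : dF f' = u := coe_injective ((hn.compat g' f' hf').2.trans hu)
    have : f' = f := hf_unique f' ⟨hf' ▸ hg'e', hdf'⟩
    exact hg_unique g' ⟨hf'.trans (congrArg _ this), rfl⟩

theorem IsRegularFactorMap.notMem_closure_graphSce (hm0 : Continuous m0)
    (hmreg : IsRegularFactorMap rE rF m0 m1) {u : F0} {w : E0} (huw : m0 ↑u = ↑w)
    (hw : w ∈ graphRg rE) : u ∉ closure (graphSce rF) := by
  have hclosed : IsClosed {x : F0 | m0 ↑x ∉ (↑) '' graphRg rE} :=
    ((isOpenMap_coe _ (isOpen_graphRg rE)).preimage (hm0.comp continuous_coe)).isClosed_compl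
  have hsce : graphSce rF ⊆ {x : F0 | m0 ↑x ∉ (↑) '' graphRg rE} :=
    fun x hx ⟨w', hw', hxw'⟩ => hx (subset_closure (hmreg x w' hxw'.symm hw').1)
  exact fun hu => closure_minimal hsce hclosed hu ⟨w, hw, huw.symm⟩

theorem IsRegularFactorMap.mem_graphFin [T2Space E0] [LocallyCompactSpace E0]
    (hrE : Continuous rE) (hrF : Continuous rF) (hm : IsFactorMap dE rE dF rF m0 m1)
    (hmreg : IsRegularFactorMap rE rF m0 m1) {u : F0} {w : E0} (huw : m0 ↑u = ↑w)
    (hw : w ∈ graphRg rE) : u ∈ graphFin rF := by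
  obtain ⟨W, hW, hWc⟩ := hw.1
  obtain ⟨K, hK, hKsub, hKc⟩ := LocallyCompactSpace.local_compact_nhds w _
    (inter_mem hW ((isOpen_graphRg rE).mem_nhds hw))
  set U : Set F0 := (↑) ⁻¹' (m0 ⁻¹' ((↑) '' K))
  have hU : U ∈ nhds u := (hm.continuous_m0.comp continuous_coe).continuousAt.preimage_mem_nhds
    (by rw [Function.comp_apply, huw, nhds_coe_eq]; exact image_mem_map hK)
  refine ⟨U, hU, ?_⟩
  have hrEK : IsCompact (rE ⁻¹' K) :=
    hWc.of_isClosed_subset (hKc.isClosed.preimage hrE) (preimage_mono fun x hx => (hKsub hx).1)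
  refine (OnePoint.isCompact_preimage_image_coe hm.continuous_m1 hm.map_infty1
    (hKc.isClosed.preimage hrE) hrEK).of_isClosed_subset ?_ ?_
  · exact (isClosed_image_coe.2 ⟨hKc.isClosed, hKc⟩).preimage
      (hm.continuous_m0.comp (continuous_coe.comp hrF))
  · rintro f ⟨w', hw'K, hw'⟩
    obtain ⟨e', he'⟩ := (hmreg (rF f) w' hw'.symm (hKsub hw'K).2).2 f rfl
    have he'w' : rE e' = w' := coe_injective ((hm.compat f e' he').1.trans hw'.symm)
    exact ⟨e', show rE e' ∈ K from he'w' ▸ hw'K, he'.symm⟩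

theorem IsRegularFactorMap.mem_graphRg [T2Space E0] [LocallyCompactSpace E0]
    (hrE : Continuous rE) (hrF : Continuous rF) (hm : IsFactorMap dE rE dF rF m0 m1)
    (hmreg : IsRegularFactorMap rE rF m0 m1) {u : F0} {w : E0} (huw : m0 ↑u = ↑w)
    (hw : w ∈ graphRg rE) : u ∈ graphRg rF :=
  ⟨hmreg.mem_graphFin hrE hrF hm huw hw, hmreg.notMem_closure_graphSce hm.continuous_m0 huw hw⟩

theorem IsRegularFactorMap.comp [T2Space E0] [LocallyCompactSpace E0]
    (hrE : Continuous rE) (hrF : Continuous rF) (hm : IsFactorMap dE rE dF rF m0 m1)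
    (hn : IsFactorMap dF rF dG rG n0 n1) (hmreg : IsRegularFactorMap rE rF m0 m1)
    (hnreg : IsRegularFactorMap rF rG n0 n1) :
    IsRegularFactorMap rE rG (m0 ∘ n0) (m1 ∘ n1) := by
  intro v w hvw hw
  obtain ⟨u, hu⟩ := OnePoint.exists_eq_coe_of_map_eq_coe hm.map_infty0 hvw
  have huw : m0 ↑u = ↑w := hu ▸ hvw
  obtain ⟨hv_edge, hv_edges_lift⟩ := hnreg v u hu (hmreg.mem_graphRg hrE hrF hm huw hw)
  refine ⟨hv_edge, fun g hg => ?_⟩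
  obtain ⟨f, hf⟩ := hv_edges_lift g hg
  have hfu : rF f = u := coe_injective ((hn.compat g f hf).1.trans (hg ▸ hu))
  obtain ⟨e', he'⟩ := (hmreg u w huw hw).2 f hfu
  exact ⟨e', by simp only [Function.comp_apply, hf, he']⟩

end

theorem statement3_general
    {E0 E1 F0 F1 G0 G1 : Type*}
    [TopologicalSpace E0] [TopologicalSpace E1] [T2Space E0]
    [LocallyCompactSpace E0]
    [TopologicalSpace F0] [TopologicalSpace F1]
    [TopologicalSpace G0] [TopologicalSpace G1]
    (dE rE : E1 → E0) (hrE : Continuous rE)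
    (dF rF : F1 → F0) (hrF : Continuous rF)
    (dG rG : G1 → G0)
    (m0 : OnePoint F0 → OnePoint E0) (m1 : OnePoint F1 → OnePoint E1)
    (n0 : OnePoint G0 → OnePoint F0) (n1 : OnePoint G1 → OnePoint F1)
    (hm : IsFactorMap dE rE dF rF m0 m1)
    (hn : IsFactorMap dF rF dG rG n0 n1)
    (hmreg : IsRegularFactorMap rE rF m0 m1)
    (hnreg : IsRegularFactorMap rF rG n0 n1) :
    IsFactorMap dE rE dG rG (m0 ∘ n0) (m1 ∘ n1) ∧
      IsRegularFactorMap rE rG (m0 ∘ n0) (m1 ∘ n1) :=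
  ⟨hm.comp hn, hmreg.comp hrE hrF hm hn hnreg⟩

/-- The composition of two regular factor maps is a regular factor map. -/
theorem statement3
    {E0 E1 F0 F1 G0 G1 : Type*}
    [TopologicalSpace E0] [TopologicalSpace E1] [T2Space E0] [T2Space E1]
    [LocallyCompactSpace E0] [LocallyCompactSpace E1]
    [TopologicalSpace F0] [TopologicalSpace F1] [T2Space F0] [T2Space F1]
    [LocallyCompactSpace F0] [LocallyCompactSpace F1]
    [TopologicalSpace G0] [TopologicalSpace G1] [T2Space G0] [T2Space G1]
    [LocallyCompactSpace G0] [LocallyCompactSpace G1]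
    (dE rE : E1 → E0) (hdE : IsLocalHomeomorph dE) (hrE : Continuous rE)
    (dF rF : F1 → F0) (hdF : IsLocalHomeomorph dF) (hrF : Continuous rF)
    (dG rG : G1 → G0) (hdG : IsLocalHomeomorph dG) (hrG : Continuous rG)
    (m0 : OnePoint F0 → OnePoint E0) (m1 : OnePoint F1 → OnePoint E1)
    (n0 : OnePoint G0 → OnePoint F0) (n1 : OnePoint G1 → OnePoint F1)
    (hm : IsFactorMap dE rE dF rF m0 m1)
    (hn : IsFactorMap dF rF dG rG n0 n1)
    (hmreg : IsRegularFactorMap rE rF m0 m1)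
    (hnreg : IsRegularFactorMap rF rG n0 n1) :
    IsFactorMap dE rE dG rG (m0 ∘ n0) (m1 ∘ n1) ∧
      IsRegularFactorMap rE rG (m0 ∘ n0) (m1 ∘ n1) :=
  statement3_general dE rE hrE dF rF hrF dG rG m0 m1 n0 n1 hm hn hmreg hnreg

end TopGraphAux
end

section
/- Let E be a topological graph and Y a closed subset of E^0_rg. Define m_Y^0 : E_Y^0 → E^0 and m_Y^1 : E_Y^1 → E^1 to be the identity on E^0 and E^1 respectively, with m_Y^0(ω(v)) = v for v ∈ Y and m_Y^1(ω(e)) = e for e ∈ d^{-1}(Y). Then m_Y^0 and m_Y^1 are proper continuous surjections, and their continuous extensions to the one-point compactifications (sending ∞ to ∞) form a factor map m_Y = (m_Y^0, m_Y^1) from E_Y to E. -/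
/-!
Both projections are proper because each glued space is a quotient of `X ⊔ S` with `S` closed,
and `id ⊔ (S ↪ X)` is proper. A point of the glued space is determined by its projection together
with whether it lies in the unglued part `ω(S \ B)` of the extra copy; `d_Y` preserves that
property, which gives uniqueness of lifted edges, while existence is read off the two kinds of
vertices.
-/

open Set Filter OnePoint

namespace TopGraphAux

/-- The points of `ω(S \ B)`: those in the extra copy of `S` that are not glued to `X`. -/
def Glue.InExtraCopy {X : Type*} {S B : Set X} : Glue X S B → Prop :=
  Quot.lift (Sum.elim (fun _ => False) (fun y => (y : X) ∉ B))
    (by rintro a b ⟨x, hx, ⟨rfl, rfl⟩ | ⟨rfl, rfl⟩⟩ <;> simp [hx])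

theorem _root_.IsProperMap.tendsto_coclosedCompact {X Z : Type*} [TopologicalSpace X]
    [TopologicalSpace Z] {f : X → Z} (hf : IsProperMap f) :
    Tendsto f (coclosedCompact X) (coclosedCompact Z) :=
  hasBasis_coclosedCompact.tendsto_right_iff.2 fun _ ⟨hK_closed, hK⟩ =>
    (hf.isCompact_preimage hK).compl_mem_coclosedCompact_of_isClosed
      (hK_closed.preimage hf.continuous)

theorem _root_.IsProperMap.continuous_onePoint_map {X Z : Type*} [TopologicalSpace X]
    [TopologicalSpace Z] {f : X → Z} (hf : IsProperMap f) : Continuous (OnePoint.map f) :=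
  OnePoint.continuous_map hf.continuous hf.tendsto_coclosedCompact

theorem _root_.IsProperMap.sumElim {X₁ X₂ Z : Type*} [TopologicalSpace X₁] [TopologicalSpace X₂]
    [TopologicalSpace Z] [T2Space Z] [LocallyCompactSpace Z] {f : X₁ → Z} {g : X₂ → Z}
    (hf : IsProperMap f) (hg : IsProperMap g) : IsProperMap (Sum.elim f g) := by
  refine isProperMap_iff_isCompact_preimage.2 ⟨hf.continuous.sumElim hg.continuous, fun K hK => ?_⟩
  rw [preimage_sumElim]
  exact ((hf.isCompact_preimage hK).image continuous_inl).union
    ((hg.isCompact_preimage hK).image continuous_inr)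

section Glue

variable {X : Type*} {S B : Set X}

theorem glueProj_surjective : Function.Surjective (glueProj S B) :=
  fun x => ⟨Glue.inl x, rfl⟩

theorem Glue.eq_of_glueProj_eq {p q : Glue X S B} (hpq : glueProj S B p = glueProj S B q)
    (hω : p.InExtraCopy ↔ q.InExtraCopy) : p = q := by
  induction p using Quot.ind with | mk a => ?_
  induction q using Quot.ind with | mk b => ?_
  rcases a with x | y <;> rcases b with x' | y'
  · exact congrArg Glue.inl hpq
  · exact Quot.sound ⟨y', of_not_not hω.2, Or.inl ⟨congrArg Sum.inl hpq, rfl⟩⟩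
  · exact (Quot.sound ⟨y, of_not_not hω.1, Or.inl ⟨congrArg Sum.inl hpq.symm, rfl⟩⟩).symm
  · exact congrArg Glue.inr (Subtype.ext hpq)

theorem isProperMap_glueProj [TopologicalSpace X] [T2Space X] [LocallyCompactSpace X]
    (hS : IsClosed S) : IsProperMap (glueProj S B) :=
  isProperMap_of_comp_of_surj continuous_quot_mk
    (continuous_quot_lift _ (continuous_id.sumElim continuous_subtype_val))
    (isProperMap_id.sumElim hS.isClosedEmbedding_subtypeVal.isProperMap)
    Quot.exists_rep

end Glue

section GlueGraph

variable {E0 E1 : Type*} [TopologicalSpace E0] (d r : E1 → E0) (Y : Set E0)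

theorem glueProj_glueD (e : Glue E1 (d ⁻¹' closure Y) (d ⁻¹' (closure Y \ Y))) :
    glueProj _ _ (glueD d Y e) = d (glueProj _ _ e) := by
  induction e using Quot.ind with | mk a => cases a <;> rfl

theorem glueProj_glueR (e : Glue E1 (d ⁻¹' closure Y) (d ⁻¹' (closure Y \ Y))) :
    glueProj _ _ (glueR d r Y e) = r (glueProj _ _ e) := by
  induction e using Quot.ind with | mk a => cases a <;> rfl

theorem inExtraCopy_glueD (e : Glue E1 (d ⁻¹' closure Y) (d ⁻¹' (closure Y \ Y))) :
    (glueD d Y e).InExtraCopy ↔ e.InExtraCopy := by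
  induction e using Quot.ind with | mk a => cases a <;> rfl

theorem eq_of_glueProj_eq_of_glueD_eq
    {e₁ e₂ : Glue E1 (d ⁻¹' closure Y) (d ⁻¹' (closure Y \ Y))}
    (hp : glueProj _ _ e₁ = glueProj _ _ e₂) (hd : glueD d Y e₁ = glueD d Y e₂) : e₁ = e₂ :=
  Glue.eq_of_glueProj_eq hp <| by
    rw [← inExtraCopy_glueD d Y e₁, ← inExtraCopy_glueD d Y e₂, hd]

theorem exists_glueProj_eq_glueD_eq {e : E1} {v : Glue E0 (closure Y) (closure Y \ Y)}
    (hv : d e = glueProj _ _ v) :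
    ∃ c : Glue E1 (d ⁻¹' closure Y) (d ⁻¹' (closure Y \ Y)),
      glueProj _ _ c = e ∧ glueD d Y c = v := by
  induction v using Quot.ind with | mk a => ?_
  rcases a with x | y
  · exact ⟨Glue.inl e, rfl, congrArg Glue.inl hv⟩
  · have he : d e ∈ closure Y := hv ▸ y.2
    exact ⟨Glue.inr ⟨e, he⟩, rfl, congrArg Glue.inr (Subtype.ext hv)⟩

end GlueGraph

theorem statement7_general
    {E0 E1 : Type*} [TopologicalSpace E0] [TopologicalSpace E1]
    [T2Space E0] [T2Space E1] [LocallyCompactSpace E0] [LocallyCompactSpace E1]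
    (d r : E1 → E0) (hd : IsLocalHomeomorph d)
    (Y : Set E0) :
    IsProperMap (glueProj (closure Y) (closure Y \ Y)) ∧
      Function.Surjective (glueProj (closure Y) (closure Y \ Y)) ∧
      IsProperMap (glueProj (d ⁻¹' closure Y) (d ⁻¹' (closure Y \ Y))) ∧
      Function.Surjective (glueProj (d ⁻¹' closure Y) (d ⁻¹' (closure Y \ Y))) ∧
      IsFactorMap d r (glueD d Y) (glueR d r Y)
        (OnePoint.map (glueProj (closure Y) (closure Y \ Y)))
        (OnePoint.map (glueProj (d ⁻¹' closure Y) (d ⁻¹' (closure Y \ Y)))) := by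
  have hp0 : IsProperMap (glueProj (closure Y) (closure Y \ Y)) :=
    isProperMap_glueProj isClosed_closure
  have hp1 : IsProperMap (glueProj (d ⁻¹' closure Y) (d ⁻¹' (closure Y \ Y))) :=
    isProperMap_glueProj (isClosed_closure.preimage hd.continuous)
  refine ⟨hp0, glueProj_surjective, hp1, glueProj_surjective,
    hp0.continuous_onePoint_map, hp1.continuous_onePoint_map, rfl, rfl, ?_, ?_⟩
  · rintro e _ he
    obtain rfl := OnePoint.coe_injective he
    exact ⟨coe_eq_coe.2 (glueProj_glueR d r Y e).symm, coe_eq_coe.2 (glueProj_glueD d Y e).symm⟩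
  · intro e v hv
    obtain ⟨c, hc, hcv⟩ := exists_glueProj_eq_glueD_eq d Y (OnePoint.coe_injective hv)
    refine ⟨c, ⟨coe_eq_coe.2 hc, hcv⟩, fun c' ⟨hc', hc'v⟩ => ?_⟩
    exact eq_of_glueProj_eq_of_glueD_eq d Y ((OnePoint.coe_injective hc').trans hc.symm)
      (hc'v.trans hcv.symm)

/-- For a topological graph `E` and a closed subset `Y` of `E⁰_rg`, the
natural projections `m_Y⁰ : E_Y⁰ → E⁰` and `m_Y¹ : E_Y¹ → E¹` are proper continuous
surjections, and their extensions to the one-point compactifications (sending `∞` to `∞`)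
form a factor map from `E_Y` to `E`. -/
theorem statement7
    {E0 E1 : Type*} [TopologicalSpace E0] [TopologicalSpace E1]
    [T2Space E0] [T2Space E1] [LocallyCompactSpace E0] [LocallyCompactSpace E1]
    (d r : E1 → E0) (hd : IsLocalHomeomorph d) (hr : Continuous r)
    (Y : Set E0) (hY : Y ⊆ graphRg r) (hYc : closure Y ∩ graphRg r = Y) :
    IsProperMap (glueProj (closure Y) (closure Y \ Y)) ∧
      Function.Surjective (glueProj (closure Y) (closure Y \ Y)) ∧
      IsProperMap (glueProj (d ⁻¹' closure Y) (d ⁻¹' (closure Y \ Y))) ∧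
      Function.Surjective (glueProj (d ⁻¹' closure Y) (d ⁻¹' (closure Y \ Y))) ∧
      IsFactorMap d r (glueD d Y) (glueR d r Y)
        (OnePoint.map (glueProj (closure Y) (closure Y \ Y)))
        (OnePoint.map (glueProj (d ⁻¹' closure Y) (d ⁻¹' (closure Y \ Y)))) :=
  statement7_general d r hd Y

end TopGraphAux
end

section
/- Let ({E_λ}_{λ∈Λ}, {m_{λ,λ'}}_{λ⪯λ'}) be a regular projective system of topological graphs over a directed set Λ (i.e., every factor map m_{λ,λ'} is regular), and let E be its projective limit. Then for each λ0 ∈ Λ, the factor map m_{λ0} = (m_{λ0}^0, m_{λ0}^1) from E to E_{λ0} is regular. -/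
open Set Filter OnePoint

namespace TopGraphAux

private theorem LimPt.ext' {Λ : Type*} [Preorder Λ] {X : Λ → Type*}
    {m : ∀ ⦃l l' : Λ⦄, l ≤ l' → OnePoint (X l') → OnePoint (X l)}
    {a b : LimPt X m} (h : a.pt = b.pt) : a = b := by
  cases a; cases b; cases h; rfl

/-- For a regular projective system of topological graphs, each factor map
`m_{λ0}` from the projective limit to `E_{λ0}` is regular. -/
theorem statement11
    {Λ : Type*} [Preorder Λ] [IsDirected Λ (· ≤ ·)] [Nonempty Λ]
    {V E : Λ → Type*}
    [∀ l, TopologicalSpace (V l)] [∀ l, TopologicalSpace (E l)]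
    [∀ l, T2Space (V l)] [∀ l, T2Space (E l)]
    [∀ l, LocallyCompactSpace (V l)] [∀ l, LocallyCompactSpace (E l)]
    (d r : ∀ l, E l → V l)
    (hd : ∀ l, IsLocalHomeomorph (d l)) (hr : ∀ l, Continuous (r l))
    (p0 : ∀ ⦃l l' : Λ⦄, l ≤ l' → OnePoint (V l') → OnePoint (V l))
    (p1 : ∀ ⦃l l' : Λ⦄, l ≤ l' → OnePoint (E l') → OnePoint (E l))
    (hfac : ∀ ⦃l l' : Λ⦄ (h : l ≤ l'), IsFactorMap (d l) (r l) (d l') (r l') (p0 h) (p1 h))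
    (hreg : ∀ ⦃l l' : Λ⦄ (h : l ≤ l'), IsRegularFactorMap (r l) (r l') (p0 h) (p1 h))
    (hid0 : ∀ (l : Λ) (h : l ≤ l) (x : OnePoint (V l)), p0 h x = x)
    (hid1 : ∀ (l : Λ) (h : l ≤ l) (x : OnePoint (E l)), p1 h x = x)
    (hcomp0 : ∀ ⦃l l' l'' : Λ⦄ (h : l ≤ l') (h' : l' ≤ l'') (x : OnePoint (V l'')),
      p0 h (p0 h' x) = p0 (h.trans h') x)
    (hcomp1 : ∀ ⦃l l' l'' : Λ⦄ (h : l ≤ l') (h' : l' ≤ l'') (x : OnePoint (E l'')),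
      p1 h (p1 h' x) = p1 (h.trans h') x)
    (dlim rlim : LimPt E p1 → LimPt V p0)
    (hdlim : ∀ (e : LimPt E p1) (l : Λ) (el : E l),
      e.pt l = ↑el → (dlim e).pt l = ↑(d l el))
    (hrlim : ∀ (e : LimPt E p1) (l : Λ) (el : E l),
      e.pt l = ↑el → (rlim e).pt l = ↑(r l el))
    (l0 : Λ) :
    IsRegularFactorMap (r l0) rlim
      (onePointLift fun v : LimPt V p0 => v.pt l0)
      (onePointLift fun e : LimPt E p1 => e.pt l0) := by
  classical
  intro v w hvw hw
  have hvl0 : v.pt l0 = ↑w := hvw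
  obtain ⟨W, hWn, hWc⟩ := hw.1
  -- each coordinate of `v` above `l0` is a genuine vertex
  have hvne : ∀ μ : Λ, l0 ≤ μ → ∃ vm : V μ, v.pt μ = ↑vm := by
    intro μ h
    have hne : v.pt μ ≠ ∞ := by
      intro hinf
      have := v.compat h
      rw [hinf, (hfac h).map_infty0, hvl0] at this
      exact (OnePoint.infty_ne_coe w) this
    obtain ⟨y, hy⟩ := OnePoint.ne_infty_iff_exists.mp hne
    exact ⟨y, hy.symm⟩
  choose vv hvv using hvne
  have hp0w : ∀ (μ : Λ) (h : l0 ≤ μ), p0 h ↑(vv μ h) = ↑w := by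
    intro μ h
    rw [← hvv μ h, v.compat h, hvl0]
  have hSne : ∀ (μ : Λ) (h : l0 ≤ μ), ∃ e : E μ, r μ e = vv μ h :=
    fun μ h => ((hreg h) (vv μ h) w (hp0w μ h) hw).1
  have hgen : ∀ (μ : Λ) (h : l0 ≤ μ) (e : E μ), r μ e = vv μ h →
      ∃ e' : E l0, p1 h ↑e = ↑e' :=
    fun μ h e he => ((hreg h) (vv μ h) w (hp0w μ h) hw).2 e he
  -- lifting edges down the system
  have hlift : ∀ (l μ : Λ) (hl : l0 ≤ l) (h : l ≤ μ) (e : E μ),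
      r μ e = vv μ (hl.trans h) → ∃ e' : E l, p1 h ↑e = ↑e' ∧ r l e' = vv l hl := by
    intro l μ hl h e he
    obtain ⟨e0, he0⟩ := hgen μ (hl.trans h) e he
    have hne : p1 h (↑e : OnePoint (E μ)) ≠ ∞ := by
      intro hinf
      rw [← hcomp1 hl h, hinf, (hfac hl).map_infty1] at he0
      exact (OnePoint.infty_ne_coe e0) he0
    obtain ⟨e', he'⟩ := OnePoint.ne_infty_iff_exists.mp hne
    refine ⟨e', he'.symm, ?_⟩
    have hc := ((hfac h).compat e e' he'.symm).1
    rw [he, ← hvv μ (hl.trans h), v.compat h, hvv l hl] at hc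
    exact (OnePoint.coe_injective hc.symm).symm
  -- the fibers, and closedness of their images in the one-point compactification
  have hT2 : ∀ l : Λ, T2Space (OnePoint (E l)) := fun l => inferInstance
  have hSclosed : ∀ (μ : Λ) (h : l0 ≤ μ),
      IsClosed ((fun e : E μ => (↑e : OnePoint (E μ))) '' (r μ ⁻¹' {vv μ h})) := by
    intro μ h
    set Sset : Set (E μ) := r μ ⁻¹' {vv μ h} with hSset
    have hKc : IsCompact ((fun e : E l0 => (↑e : OnePoint (E l0))) '' (r l0 ⁻¹' W)) :=
      hWc.image OnePoint.continuous_coe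
    have hKcl : IsClosed ((fun e : E l0 => (↑e : OnePoint (E l0))) '' (r l0 ⁻¹' W)) :=
      hKc.isClosed
    set T : Set (OnePoint (E μ)) :=
      p1 h ⁻¹' ((fun e : E l0 => (↑e : OnePoint (E l0))) '' (r l0 ⁻¹' W)) with hTdef
    have hTcl : IsClosed T := hKcl.preimage (hfac h).continuous_m1
    have hsub : (fun e : E μ => (↑e : OnePoint (E μ))) '' Sset ⊆ T := by
      rintro _ ⟨e, he, rfl⟩
      obtain ⟨e', he', hre'⟩ := hlift l0 μ le_rfl h e he
      have hwW : w ∈ W := mem_of_mem_nhds hWn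
      have hvvl0 : vv l0 le_rfl = w := by
        have := hvv l0 le_rfl
        rw [hvl0] at this
        exact (OnePoint.coe_injective this).symm
      refine mem_preimage.mpr ⟨e', ?_, he'.symm⟩
      simp only [mem_preimage, hre', hvvl0]
      exact hwW
    have hCl : IsClosed ((fun e : E μ => (↑e : OnePoint (E μ))) '' Sset ∪ {∞}) := by
      rw [← isOpen_compl_iff]
      have hcompl : ((fun e : E μ => (↑e : OnePoint (E μ))) '' Sset ∪ {∞})ᶜ =
          (fun e : E μ => (↑e : OnePoint (E μ))) '' Ssetᶜ := by
        ext x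
        induction x using OnePoint.rec with
        | infty => simp
        | coe y =>
          simp only [mem_compl_iff, mem_union, mem_singleton_iff, mem_image]
          constructor
          · intro hx
            refine ⟨y, ?_, rfl⟩
            intro hy
            exact hx (Or.inl ⟨y, hy, rfl⟩)
          · rintro ⟨z, hz, hzy⟩ (⟨u, hu, huy⟩ | hinf)
            · have huz : u = z := OnePoint.coe_injective (huy.trans hzy.symm)
              exact hz (huz ▸ hu)
            · exact OnePoint.coe_ne_infty y hinf
      rw [hcompl]
      exact OnePoint.isOpenEmbedding_coe.isOpenMap _
        (isClosed_singleton.preimage (hr μ)).isOpen_compl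
    have himg : (fun e : E μ => (↑e : OnePoint (E μ))) '' Sset =
        ((fun e : E μ => (↑e : OnePoint (E μ))) '' Sset ∪ {∞}) ∩ T := by
      apply Subset.antisymm
      · exact subset_inter (subset_union_left) hsub
      · rintro x ⟨(hx | hx), hxT⟩
        · exact hx
        · exfalso
          rw [mem_singleton_iff] at hx
          subst hx
          rw [hTdef, mem_preimage, (hfac h).map_infty1] at hxT
          obtain ⟨z, _, hz⟩ := hxT
          exact OnePoint.coe_ne_infty z hz
    rw [himg]
    exact hCl.inter hTcl
  -- the directed family of closed subsets of the compact product space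
  set A : {μ : Λ // l0 ≤ μ} → Set (∀ l, OnePoint (E l)) := fun ν =>
    {x | ∀ (l : Λ) (h : l ≤ ν.1), p1 h (x ν.1) = x l} ∩
    {x | x ν.1 ∈ (fun e : E ν.1 => (↑e : OnePoint (E ν.1))) '' (r ν.1 ⁻¹' {vv ν.1 ν.2})}
    with hA
  have hAclosed : ∀ ν, IsClosed (A ν) := by
    intro ν
    apply IsClosed.inter
    · have : {x : ∀ l, OnePoint (E l) | ∀ (l : Λ) (h : l ≤ ν.1), p1 h (x ν.1) = x l} =
          ⋂ (l : Λ), ⋂ (h : l ≤ ν.1), {x | p1 h (x ν.1) = x l} := by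
        ext x; simp [Set.mem_iInter]
      rw [this]
      exact isClosed_iInter fun l => isClosed_iInter fun h =>
        isClosed_eq ((hfac h).continuous_m1.comp (continuous_apply ν.1)) (continuous_apply l)
    · exact (hSclosed ν.1 ν.2).preimage (continuous_apply ν.1)
  have hAne : ∀ ν, (A ν).Nonempty := by
    intro ν
    obtain ⟨e, he⟩ := hSne ν.1 ν.2
    refine ⟨fun l => if h : l ≤ ν.1 then p1 h ↑e else ∞, ?_, ?_⟩
    · intro l h
      show p1 h (if h' : ν.1 ≤ ν.1 then p1 h' (↑e : OnePoint (E ν.1)) else ∞) =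
        if h' : l ≤ ν.1 then p1 h' (↑e : OnePoint (E ν.1)) else ∞
      rw [dif_pos (le_refl ν.1), dif_pos h, hid1]
    · refine ⟨e, he, ?_⟩
      show (↑e : OnePoint (E ν.1)) = if h' : ν.1 ≤ ν.1 then p1 h' (↑e : OnePoint (E ν.1)) else ∞
      rw [dif_pos (le_refl ν.1), hid1]
  have hAdir : Directed (· ⊇ ·) A := by
    rintro ν ν'
    obtain ⟨μ0, h1, h2⟩ := directed_of (· ≤ ·) ν.1 ν'.1
    have key : ∀ (κ : {μ : Λ // l0 ≤ μ}) (hk : κ.1 ≤ μ0),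
        A ⟨μ0, κ.2.trans hk⟩ ⊆ A κ := by
      rintro κ hk x ⟨hc, e, he, hxe⟩
      constructor
      · intro l h
        have h1' := hc κ.1 hk
        have h2' := hc l (h.trans hk)
        rw [← h1', ← h2', hcomp1]
      · obtain ⟨e', he', hre'⟩ := hlift κ.1 μ0 κ.2 hk e he
        have : x κ.1 = ↑e' := by rw [← hc κ.1 hk, ← hxe]; exact he'
        exact ⟨e', hre', this.symm⟩
    exact ⟨⟨μ0, ν.2.trans h1⟩, key ν h1, key ν' h2⟩
  have : Nonempty {μ : Λ // l0 ≤ μ} := ⟨⟨l0, le_rfl⟩⟩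
  obtain ⟨x, hx⟩ := IsCompact.nonempty_iInter_of_directed_nonempty_isCompact_isClosed A
    hAdir hAne (fun ν => (hAclosed ν).isCompact) hAclosed
  rw [mem_iInter] at hx
  -- package the thread as an element of the limit graph
  have hcompat : ∀ ⦃l l' : Λ⦄ (h : l ≤ l'), p1 h (x l') = x l := by
    intro l l' h
    obtain ⟨μ0, h1, h2⟩ := directed_of (· ≤ ·) l' l0
    have hc := (hx ⟨μ0, h2⟩).1
    rw [← hc l' h1, ← hc l (h.trans h1), hcomp1]
  have hedge : ∀ (μ : Λ) (h : l0 ≤ μ), ∃ e : E μ, x μ = ↑e ∧ r μ e = vv μ h := by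
    intro μ h
    obtain ⟨e, he, hxe⟩ := (hx ⟨μ, h⟩).2
    exact ⟨e, hxe.symm, he⟩
  obtain ⟨e0, hxe0, -⟩ := hedge l0 le_rfl
  set elim : LimPt E p1 :=
    ⟨x, hcompat, ⟨l0, by rw [hxe0]; exact OnePoint.coe_ne_infty e0⟩⟩ with helim
  constructor
  · refine ⟨elim, LimPt.ext' ?_⟩
    funext l
    obtain ⟨μ0, h1, h2⟩ := directed_of (· ≤ ·) l l0
    obtain ⟨eμ, hxeμ, hreμ⟩ := hedge μ0 h2
    have hrl : (rlim elim).pt μ0 = v.pt μ0 := by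
      rw [hrlim elim μ0 eμ hxeμ, hreμ, ← hvv μ0 h2]
    calc (rlim elim).pt l = p0 h1 ((rlim elim).pt μ0) := ((rlim elim).compat h1).symm
      _ = p0 h1 (v.pt μ0) := by rw [hrl]
      _ = v.pt l := v.compat h1
  · intro e hre
    obtain ⟨l1, hl1⟩ := e.exists_ne_infty
    obtain ⟨μ0, h1, h2⟩ := directed_of (· ≤ ·) l1 l0
    have hμne : e.pt μ0 ≠ ∞ := by
      intro hinf
      have := e.compat h1
      rw [hinf, (hfac h1).map_infty1] at this
      exact hl1 this.symm
    obtain ⟨eμ, heμ⟩ := OnePoint.ne_infty_iff_exists.mp hμne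
    have hrv : (rlim e).pt μ0 = ↑(r μ0 eμ) := hrlim e μ0 eμ heμ.symm
    rw [hre] at hrv
    have hreq : r μ0 eμ = vv μ0 h2 := by
      have := hvv μ0 h2
      rw [hrv] at this
      exact OnePoint.coe_injective this
    obtain ⟨e', he'⟩ := hgen μ0 h2 eμ hreq
    refine ⟨e', ?_⟩
    have : e.pt l0 = ↑e' := by rw [← e.compat h2, ← heμ, he']
    exact this


end TopGraphAux
end
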